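/- For all integers n ≥ 1 and 0 ≤ k ≤ n and all real numbers x and y > 0, the partial Bell polynomial evaluated at the vector with l-th entry (x)_l·y^{x−l} satisfies B_{n,k}((x)_1·y^{x−1}, (x)_2·y^{x−2}, …, (x)_{n−k+1}·y^{x−(n−k+1)}) = y^{xk−n}·s_{nk}(x). -/

import Mathlib

/-!
Write `B_{n,k}(a) = n! · Σ_j ∏_i (a_{i+1}/(i+1)!)^{j_i} / j_i!`, the sum running over the tuples `j`
of weight `Σ (i+1) j_i = n` and length `Σ j_i = k`. Removing one part of size `i+1` is a bijection,
so `Σ_j j_i · term(j)` over weight `n+i+1`, length `k+1` equals `a_{i+1}/(i+1)!` times the sum over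
weight `n`, length `k`. For `a_l = (x)_l` the identity `(x)_{t+2} = (x-t-1)·(x)_{t+1}` turns this
into `B_{n+1,k+1} = x·B_{n,k} + ((k+1)x - n)·B_{n,k+1}` (weigh the tuples once by their part sizes,
once by `x` minus their part sizes); the recurrences of `s` and `S` give the same recurrence for
`s_{nk}(x)`. Finally, the factors `y^{x-l}` contribute `y^{Σ_l (x-l) j_l} = y^{xk-n}` to every term.
-/

noncomputable section

/-- Stirling numbers of the first kind `s(n,k)` (signed), real-valued,
defined by the recurrence `s(n+1,k) = s(n,k-1) - n·s(n,k)`. -/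
def st1 : ℕ → ℕ → ℝ
  | 0, 0 => 1
  | 0, _ + 1 => 0
  | _ + 1, 0 => 0
  | n + 1, k + 1 => st1 n k - (n : ℝ) * st1 n (k + 1)

/-- Stirling numbers of the second kind `S(n,k)`, real-valued,
defined by the recurrence `S(n+1,k) = S(n,k-1) + k·S(n,k)`. -/
def st2 : ℕ → ℕ → ℝ
  | 0, 0 => 1
  | 0, _ + 1 => 0
  | _ + 1, 0 => 0
  | n + 1, k + 1 => st2 n k + ((k : ℝ) + 1) * st2 n (k + 1)

/-- `snk n k x = ∑_{l=k}^n s(n,l) S(l,k) x^l`. -/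
def snk (n k : ℕ) (x : ℝ) : ℝ := ∑ l ∈ Finset.Icc k n, st1 n l * st2 l k * x ^ l

/-- Falling factorial `(x)_n = x (x-1) ⋯ (x-n+1)`, with `(x)_0 = 1`. -/
def ff (x : ℝ) (n : ℕ) : ℝ := ∏ i ∈ Finset.range n, (x - (i : ℝ))

/-- The index set `P_{n,k}`: tuples `(j_1, …, j_{n-k+1})`, 0-indexed by `Fin (n-k+1)`
(entry `i` representing `j_{i+1}`), with `∑ i·j_i = n` and `∑ j_i = k`. -/
def PIdx (n k : ℕ) : Finset (Fin (n - k + 1) → ℕ) :=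
  (Fintype.piFinset fun _ => Finset.range (n + 1)).filter fun j =>
    (∑ i, (i.1 + 1) * j i) = n ∧ (∑ i, j i) = k

/-- The partial Bell polynomial `B_{n,k}(x_1,…,x_{n-k+1})`, the `l`-th argument being `x l`. -/
def bellP (n k : ℕ) (x : ℕ → ℝ) : ℝ :=
  ∑ j ∈ PIdx n k,
    ((n.factorial : ℝ) / ∏ i, ((j i).factorial : ℝ)) *
      ∏ i, (x (i.1 + 1) / ((i.1 + 1).factorial : ℝ)) ^ j i

/-- The index set `Q^{d₀}_{d,k} = { j : ∑ j_s = k, 1 ≤ j_s ≤ d_s }`. -/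
def QIdx (d0 : ℕ) (dv : Fin d0 → ℕ) (k : ℕ) : Finset (Fin d0 → ℕ) :=
  (Fintype.piFinset fun s => Finset.Icc 1 (dv s)).filter fun j => (∑ s, j s) = k

/-- Complete monotonicity of `h` on `(0,∞)`: `h` is infinitely differentiable there and
`(-1)^k h^{(k)}(t) ≥ 0` for all `k ∈ ℕ₀` and `t ∈ (0,∞)`. -/
def CMOn (h : ℝ → ℝ) : Prop :=
  ContDiffOn ℝ ⊤ h (Set.Ioi 0) ∧
    ∀ k : ℕ, ∀ t ∈ Set.Ioi (0 : ℝ), 0 ≤ (-1 : ℝ) ^ k * iteratedDerivWithin k h (Set.Ioi 0) t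

/-- Partial derivative of `F : ℝ^ι → ℝ` in the coordinate `i`. -/
def pdrv {ι : Type*} [DecidableEq ι] (i : ι) (F : (ι → ℝ) → ℝ) : (ι → ℝ) → ℝ :=
  fun x => deriv (fun y => F (Function.update x i y)) (x i)

open Finset Nat

theorem add_single_eq_update {ι M : Type*} [DecidableEq ι] [AddZeroClass M] (f : ι → M) (i : ι)
    (b : M) : f + Pi.single i b = Function.update f i (f i + b) := by
  ext l
  rcases eq_or_ne l i with rfl | h <;> simp [*]

/-- `PIdx n k = bellIdx (n - k + 1) n k`. The number `m` of slots is left free: slots beyond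
`n - k` are empty anyway, so the induction on `n` can keep `m` fixed. -/
def bellIdx (m n k : ℕ) : Finset (Fin m → ℕ) :=
  (Fintype.piFinset fun _ => range (n + 1)).filter fun j =>
    (∑ i, (i.1 + 1) * j i) = n ∧ (∑ i, j i) = k

def bellCoeff (a : ℕ → ℝ) (i d : ℕ) : ℝ := (a (i + 1) / (i + 1)!) ^ d / d !

def bellTerm (a : ℕ → ℝ) {m : ℕ} (j : Fin m → ℕ) : ℝ := ∏ i, bellCoeff a i.1 (j i)

def bellSum (a : ℕ → ℝ) (m n k : ℕ) : ℝ := ∑ j ∈ bellIdx m n k, bellTerm a j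

def bellMoment (a : ℕ → ℝ) (m n k : ℕ) (i : Fin m) : ℝ :=
  ∑ j ∈ bellIdx m n k, (j i : ℝ) * bellTerm a j

section BellSum

variable {m n k : ℕ} {j : Fin m → ℕ}

theorem mem_bellIdx :
    j ∈ bellIdx m n k ↔ (∑ i : Fin m, (i.1 + 1) * j i) = n ∧ (∑ i, j i) = k := by
  simp only [bellIdx, mem_filter, Fintype.mem_piFinset, mem_range, and_iff_right_iff_imp]
  rintro ⟨hn, -⟩ i
  have := hn ▸ single_le_sum (f := fun i : Fin m => (i.1 + 1) * j i) (by simp) (mem_univ i)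
  nlinarith

theorem add_mul_apply_le_of_mem_bellIdx (hj : j ∈ bellIdx m n k) (i : Fin m) :
    k + i * j i ≤ n := by
  obtain ⟨hn, hk⟩ := mem_bellIdx.1 hj
  have := single_le_sum (f := fun i : Fin m => i.1 * j i) (by simp) (mem_univ i)
  simp only [add_mul, one_mul, sum_add_distrib, hk] at hn
  omega

theorem apply_eq_zero_of_mem_bellIdx (hj : j ∈ bellIdx m n k) {i : Fin m} (hi : n < k + i) :
    j i = 0 := by
  have := add_mul_apply_le_of_mem_bellIdx hj i
  by_contra h
  nlinarith [Nat.one_le_iff_ne_zero.2 h]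

theorem add_single_mem_bellIdx_iff (i : Fin m) :
    j + Pi.single i 1 ∈ bellIdx m (n + (i + 1)) (k + 1) ↔ j ∈ bellIdx m n k := by
  simp only [mem_bellIdx, Pi.add_apply, mul_add, sum_add_distrib, Pi.single_apply, mul_ite,
    mul_one, mul_zero, sum_ite_eq', mem_univ, if_true]
  omega

variable (a : ℕ → ℝ)

theorem succ_mul_bellCoeff_succ (i d : ℕ) :
    ((d : ℝ) + 1) * bellCoeff a i (d + 1) = a (i + 1) / (i + 1)! * bellCoeff a i d := by
  simp only [bellCoeff, factorial_succ, cast_mul, pow_succ]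
  field_simp
  push_cast
  ring

theorem succ_mul_bellTerm_add_single (i : Fin m) :
    ((j i : ℝ) + 1) * bellTerm a (j + Pi.single i 1) = a (i + 1) / (i + 1)! * bellTerm a j := by
  have hsplit : ∀ v, ∏ l, Function.update (fun l : Fin m => bellCoeff a l (j l)) i v l =
      v * ∏ l ∈ univ \ {i}, bellCoeff a l (j l) :=
    fun v => prod_update_of_mem (mem_univ i) _ v
  have hj : bellTerm a j = bellCoeff a i (j i) * ∏ l ∈ univ \ {i}, bellCoeff a l (j l) := by
    rw [← hsplit, Function.update_eq_self]; rfl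
  simp only [bellTerm, add_single_eq_update, Function.apply_update (fun l : Fin m => bellCoeff a l),
    hsplit]
  rw [← mul_assoc, succ_mul_bellCoeff_succ, mul_assoc, ← hj, bellTerm]

theorem bellMoment_add_succ (i : Fin m) :
    bellMoment a m (n + (i + 1)) (k + 1) i = a (i + 1) / (i + 1)! * bellSum a m n k := by
  have single_le {j : Fin m → ℕ} (hi : j i ≠ 0) : Pi.single i 1 ≤ j := fun l => by
    rcases eq_or_ne l i with rfl | h <;> simp [*, Nat.one_le_iff_ne_zero]
  rw [bellMoment, ← sum_filter_of_ne (p := fun j => j i ≠ 0) (by aesop), bellSum, mul_sum]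
  symm
  refine sum_nbij' (· + Pi.single i 1) (· - Pi.single i 1) ?_ ?_ ?_ ?_ ?_
  · intro j hj
    simp [add_single_mem_bellIdx_iff, hj]
  · intro j hj
    obtain ⟨hj, hi⟩ := mem_filter.1 hj
    rwa [← add_single_mem_bellIdx_iff i, tsub_add_cancel_of_le (single_le hi)]
  · intro j _
    simp
  · intro j hj
    exact tsub_add_cancel_of_le (single_le (mem_filter.1 hj).2)
  · intro j _
    rw [← succ_mul_bellTerm_add_single]
    simp

theorem bellMoment_of_lt {i : Fin m} (h : n < k + i) : bellMoment a m n k i = 0 :=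
  sum_eq_zero fun j hj => by simp [apply_eq_zero_of_mem_bellIdx hj h]

theorem sum_mul_bellMoment (f : Fin m → ℝ) {c : ℝ}
    (hf : ∀ j ∈ bellIdx m n k, ∑ i, f i * j i = c) :
    ∑ i, f i * bellMoment a m n k i = c * bellSum a m n k := by
  simp_rw [bellMoment, bellSum, mul_sum, ← mul_assoc]
  rw [sum_comm]
  refine sum_congr rfl fun j hj => ?_
  rw [← sum_mul, hf j hj]

theorem bellSum_zero_zero : bellSum a m 0 0 = 1 := by
  have : bellIdx m 0 0 = {0} := by
    ext j
    simp [mem_bellIdx, funext_iff]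
  simp [bellSum, this, bellTerm, bellCoeff]

theorem bellSum_of_lt (h : n < k) : bellSum a m n k = 0 := by
  refine sum_eq_zero fun j hj => absurd h (not_lt.2 ?_)
  obtain ⟨hn, hk⟩ := mem_bellIdx.1 hj
  calc k = ∑ i, j i := hk.symm
    _ ≤ ∑ i : Fin m, (i.1 + 1) * j i :=
      sum_le_sum fun i _ => Nat.le_mul_of_pos_left _ i.1.succ_pos
    _ = n := hn

theorem bellSum_succ_zero : bellSum a m (n + 1) 0 = 0 := by
  refine sum_eq_zero fun j hj => ?_
  obtain ⟨hn, hk⟩ := mem_bellIdx.1 hj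
  simp_all [sum_eq_zero_iff]

end BellSum

section FallingFactorial

variable (x : ℝ) {m n k : ℕ}

theorem succ_succ_mul_ff_div (t : ℕ) :
    ((t : ℝ) + 2) * (ff x (t + 2) / (t + 2)!) = (x - (t + 1)) * (ff x (t + 1) / (t + 1)!) := by
  rw [ff, prod_range_succ, ← ff, factorial_succ (t + 1)]
  push_cast
  field_simp
  ring

theorem succ_succ_mul_bellMoment_ff_succ (t : Fin m) :
    ((t : ℝ) + 2) * bellMoment (ff x) (m + 1) (n + 1) (k + 1) t.succ =
      (x - (t + 1)) * bellMoment (ff x) (m + 1) n (k + 1) t.castSucc := by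
  by_cases h : t + 1 ≤ n
  · obtain ⟨p, rfl⟩ : ∃ p, n = p + (t + 1) := ⟨n - (t + 1), by omega⟩
    have hsucc := bellMoment_add_succ (ff x) (n := p) (k := k) t.succ
    have hcast := bellMoment_add_succ (ff x) (n := p) (k := k) t.castSucc
    simp only [Fin.val_succ, Fin.val_castSucc] at hsucc hcast
    rw [add_assoc, hsucc, hcast, ← mul_assoc, ← mul_assoc]
    exact congrArg (· * _) (succ_succ_mul_ff_div x t)
  · rw [bellMoment_of_lt _ (by simp; omega), bellMoment_of_lt _ (by simp; omega), mul_zero,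
      mul_zero]

theorem bellSum_ff_succ_succ (hm : n - k ≤ m) :
    ((n : ℝ) + 1) * bellSum (ff x) (m + 1) (n + 1) (k + 1) =
      x * bellSum (ff x) (m + 1) n k + ((k + 1) * x - n) * bellSum (ff x) (m + 1) n (k + 1) := by
  have hweight : ∀ j ∈ bellIdx (m + 1) (n + 1) (k + 1),
      ∑ i : Fin (m + 1), ((i : ℕ) + 1 : ℝ) * j i = n + 1 := fun j hj => by
    exact_mod_cast (mem_bellIdx.1 hj).1
  have hcount : ∀ j ∈ bellIdx (m + 1) n (k + 1),
      ∑ i : Fin (m + 1), (x - ((i : ℕ) + 1)) * j i = (k + 1) * x - n := fun j hj => by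
    obtain ⟨hn, hk⟩ := mem_bellIdx.1 hj
    have hn' : ∑ i : Fin (m + 1), ((i : ℕ) + 1 : ℝ) * j i = n := by exact_mod_cast hn
    have hk' : ∑ i : Fin (m + 1), (j i : ℝ) = k + 1 := by exact_mod_cast hk
    simp_rw [sub_mul, sum_sub_distrib, ← mul_sum, hn', hk']
    ring
  have hfirst := bellMoment_add_succ (ff x) (n := n) (k := k) (0 : Fin (m + 1))
  rw [Fin.val_zero, zero_add, ff, range_one, prod_singleton] at hfirst
  have hlast := bellMoment_of_lt (ff x) (n := n) (k := k + 1) (i := Fin.last m) (by simp; omega)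
  calc ((n : ℝ) + 1) * bellSum (ff x) (m + 1) (n + 1) (k + 1)
      = ∑ i : Fin (m + 1), ((i : ℕ) + 1 : ℝ) * bellMoment (ff x) (m + 1) (n + 1) (k + 1) i :=
        (sum_mul_bellMoment _ _ hweight).symm
    _ = x * bellSum (ff x) (m + 1) n k +
          ∑ t : Fin m, (x - ((t : ℕ) + 1)) * bellMoment (ff x) (m + 1) n (k + 1) t.castSucc := by
        rw [Fin.sum_univ_succ, hfirst]
        simp [← succ_succ_mul_bellMoment_ff_succ, add_assoc, one_add_one_eq_two]
    _ = x * bellSum (ff x) (m + 1) n k + ((k + 1) * x - n) * bellSum (ff x) (m + 1) n (k + 1) := by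
        rw [← sum_mul_bellMoment _ _ hcount, Fin.sum_univ_castSucc, hlast]
        simp

end FallingFactorial

theorem st1_eq_zero_of_lt {n l : ℕ} (h : n < l) : st1 n l = 0 := by
  induction n generalizing l with
  | zero => obtain ⟨l, rfl⟩ := exists_eq_add_one.2 h; rfl
  | succ n ih =>
    obtain ⟨l, rfl⟩ := exists_eq_add_one.2 (zero_lt_of_lt h)
    rw [st1, ih (by omega), ih (by omega), mul_zero, sub_zero]

theorem st2_eq_zero_of_lt {l k : ℕ} (h : l < k) : st2 l k = 0 := by
  induction l generalizing k with
  | zero => obtain ⟨k, rfl⟩ := exists_eq_add_one.2 h; rfl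
  | succ l ih =>
    obtain ⟨k, rfl⟩ := exists_eq_add_one.2 (zero_lt_of_lt h)
    rw [st2, ih (by omega), ih (by omega), mul_zero, add_zero]

section Snk

variable {n k N : ℕ} (x : ℝ)

theorem snk_eq_sum_range (hN : n < N) :
    snk n k x = ∑ l ∈ range N, st1 n l * st2 l k * x ^ l := by
  refine sum_subset (fun l hl => by simp at hl ⊢; omega) fun l hl hnl => ?_
  rw [mem_range] at hl
  rw [mem_Icc, not_and_or, not_le, not_le] at hnl
  rcases hnl with h | h
  · rw [st2_eq_zero_of_lt h, mul_zero, zero_mul]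
  · rw [st1_eq_zero_of_lt h, zero_mul, zero_mul]

theorem snk_zero_zero : snk 0 0 x = 1 := by
  simp [snk, st1, st2]

theorem snk_of_lt (h : n < k) : snk n k x = 0 := by
  rw [snk, Icc_eq_empty_of_lt h, sum_empty]

theorem snk_succ_zero : snk (n + 1) 0 x = 0 :=
  sum_eq_zero fun l _ => by
    cases l with
    | zero => rw [st1, zero_mul, zero_mul]
    | succ l => rw [st2, mul_zero, zero_mul]

theorem snk_eq_sum_range_succ (hk : 0 < k) (hN : n < N + 1) :
    snk n k x = ∑ l ∈ range N, st1 n (l + 1) * st2 (l + 1) k * x ^ (l + 1) := by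
  obtain ⟨k, rfl⟩ := exists_eq_add_one.2 hk
  rw [snk_eq_sum_range x hN, sum_range_succ', st2, mul_zero, zero_mul, add_zero]

theorem snk_succ_succ :
    snk (n + 1) (k + 1) x = x * snk n k x + ((k + 1) * x - n) * snk n (k + 1) x := by
  have hterm : ∀ l, st1 (n + 1) (l + 1) * st2 (l + 1) (k + 1) * x ^ (l + 1) =
      x * (st1 n l * st2 l k * x ^ l) + (k + 1) * x * (st1 n l * st2 l (k + 1) * x ^ l) -
        n * (st1 n (l + 1) * st2 (l + 1) (k + 1) * x ^ (l + 1)) := fun l => by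
    rw [st1, st2]
    ring
  rw [snk_eq_sum_range_succ x k.succ_pos (lt_add_one (n + 1)), sum_congr rfl fun l _ => hterm l,
    sum_sub_distrib, sum_add_distrib, ← mul_sum, ← mul_sum, ← mul_sum,
    ← snk_eq_sum_range_succ x k.succ_pos (by omega), ← snk_eq_sum_range x (lt_add_one n),
    ← snk_eq_sum_range x (lt_add_one n)]
  ring

end Snk

theorem factorial_mul_bellSum_ff (x : ℝ) {n k m : ℕ} (hm : n - k + 1 ≤ m) :
    n ! * bellSum (ff x) m n k = snk n k x := by
  induction n generalizing k with
  | zero =>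
    cases k with
    | zero => simp [bellSum_zero_zero, snk_zero_zero]
    | succ k => simp [bellSum_of_lt _ k.succ_pos, snk_of_lt _ k.succ_pos]
  | succ n ih =>
    cases k with
    | zero => simp [bellSum_succ_zero, snk_succ_zero]
    | succ k =>
      obtain ⟨m, rfl⟩ := exists_eq_add_one.2 (show 0 < m by omega)
      rw [snk_succ_succ, ← ih (by omega), ← ih (by omega), factorial_succ, cast_mul, cast_succ,
        mul_assoc, mul_left_comm, bellSum_ff_succ_succ x (by omega : n - k ≤ m)]
      ring

theorem bellP_eq_factorial_mul_bellSum (n k : ℕ) (a : ℕ → ℝ) :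
    bellP n k a = n ! * bellSum a (n - k + 1) n k := by
  simp only [bellP, bellSum, bellTerm, bellCoeff, mul_sum, prod_div_distrib]
  refine sum_congr rfl fun j _ => ?_
  ring

theorem bellP_mul_rpow (n k : ℕ) (a : ℕ → ℝ) {x y : ℝ} (hy : 0 < y) :
    bellP n k (fun l => a l * y ^ (x - l)) = y ^ (x * k - n) * bellP n k a := by
  rw [bellP, bellP, mul_sum]
  refine sum_congr rfl fun j hj => ?_
  obtain ⟨hn, hk⟩ := mem_bellIdx.1 (show j ∈ bellIdx (n - k + 1) n k from hj)
  have hn' : ∑ i : Fin (n - k + 1), ((i + 1 : ℕ) : ℝ) * j i = n := by exact_mod_cast hn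
  have hk' : ∑ i : Fin (n - k + 1), (j i : ℝ) = k := by exact_mod_cast hk
  have hexp : ∑ i : Fin (n - k + 1), (x - ((i : ℕ) + 1 : ℕ)) * j i = x * k - n := by
    simp_rw [sub_mul, sum_sub_distrib, ← mul_sum, hn', hk']
  have hfactor : ∀ i : Fin (n - k + 1),
      (a (i + 1) * y ^ (x - ((i + 1 : ℕ) : ℝ)) / (i + 1)!) ^ j i =
        (a (i + 1) / (i + 1)!) ^ j i * y ^ ((x - ((i : ℕ) + 1 : ℕ)) * j i) := fun i => by
    rw [mul_div_right_comm, mul_pow, Real.rpow_mul_natCast hy.le]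
  simp_rw [hfactor, prod_mul_distrib, ← Real.rpow_sum_of_pos hy, hexp]
  ring

theorem stmt4_general (n k : ℕ) (x y : ℝ) (hy : 0 < y) :
    bellP n k (fun l => ff x l * y ^ (x - (l : ℝ))) =
      y ^ (x * (k : ℝ) - (n : ℝ)) * snk n k x := by
  rw [bellP_mul_rpow n k (ff x) hy, bellP_eq_factorial_mul_bellSum,
    factorial_mul_bellSum_ff x le_rfl]

/-- `B_{n,k}((x)_1 y^{x-1}, …, (x)_{n-k+1} y^{x-(n-k+1)}) = y^{xk-n} s_{nk}(x)`. -/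
theorem stmt4 (n k : ℕ) (hn : 1 ≤ n) (hkn : k ≤ n) (x y : ℝ) (hy : 0 < y) :
    bellP n k (fun l => ff x l * y ^ (x - (l : ℝ))) =
      y ^ (x * (k : ℝ) - (n : ℝ)) * snk n k x :=
  stmt4_general n k x y hy
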